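/- Let {A_1,…,A_p} be an even-covering of finite subsets of ℕ. Then there exist finite sets B_1,…,B_p forming a double-covering {B_1,…,B_p} and a surjective map φ : ∪_{k=1}^p B_k → ∪_{k=1}^p A_k such that φ(B_k) = A_k for every k = 1,…,p. -/

import Mathlib

/-- The union of all member sets of a set-collection. -/
def unionC (C : Multiset (Finset ℕ)) : Finset ℕ := C.sup

/-- A set-collection is a double-covering if every point of its union lies in
exactly two member sets (counted with multiplicity). -/
def IsDoubleCover (C : Multiset (Finset ℕ)) : Prop :=
  ∀ a ∈ unionC C, Multiset.countP (fun A => a ∈ A) C = 2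

/-- A set-collection is an even-covering if every point of its union lies in an
even number of member sets (counted with multiplicity). -/
def IsEvenCover (C : Multiset (Finset ℕ)) : Prop :=
  ∀ a ∈ unionC C, Even (Multiset.countP (fun A => a ∈ A) C)

/-- Two set-collections are isomorphic: there is a bijection between their
unions mapping the first multiset of sets onto the second. -/
def Isomorphic (C D : Multiset (Finset ℕ)) : Prop :=
  ∃ φ : ℕ → ℕ, Set.BijOn φ ↑(unionC C) ↑(unionC D) ∧
    C.map (Finset.image φ) = D

/-- A set-collection is connected if any two member sets are joined by a chain
of member sets with consecutive nonempty intersections. -/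
def ConnectedColl (C : Multiset (Finset ℕ)) : Prop :=
  ∀ A ∈ C, ∀ B ∈ C,
    Relation.ReflTransGen (fun X Y => X ∈ C ∧ Y ∈ C ∧ (X ∩ Y).Nonempty) A B

/-- `D` is a connected component of `C`: a nonempty connected sub-multiset
separated from the rest of `C`. -/
def IsComponent (C D : Multiset (Finset ℕ)) : Prop :=
  D ≤ C ∧ D ≠ 0 ∧ ConnectedColl D ∧ ∀ B ∈ C - D, ∀ A ∈ D, B ∩ A = ∅

/-- A set-collection is standard if no two of its distinct connected components
are isomorphic. -/
def IsStandard (C : Multiset (Finset ℕ)) : Prop :=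
  ∀ D E : Multiset (Finset ℕ),
    IsComponent C D → IsComponent C E → D ≠ E → ¬ Isomorphic D E

/-- `μ_{l,p}(full)`: the number of isomorphism classes of double-coverings of
`p` sets each of cardinality `l`. -/
noncomputable def muFull (l p : ℕ) : ℕ :=
  Nat.card (Quot (fun C D : {C : Multiset (Finset ℕ) //
      Multiset.card C = p ∧ IsDoubleCover C ∧ ∀ A ∈ C, A.card = l} =>
    Isomorphic C.1 D.1))

/-- `μ_{l,p}(standard)`: the number of isomorphism classes of standard
double-coverings of `p` sets each of cardinality `l`. -/
noncomputable def muStandard (l p : ℕ) : ℕ :=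
  Nat.card (Quot (fun C D : {C : Multiset (Finset ℕ) //
      Multiset.card C = p ∧ IsDoubleCover C ∧ IsStandard C ∧ ∀ A ∈ C, A.card = l} =>
    Isomorphic C.1 D.1))

/-- `μ*_{l,p}(full)`: the number of isomorphism classes of double-coverings of
`p` sets each of cardinality between `1` and `l`. -/
noncomputable def muStarFull (l p : ℕ) : ℕ :=
  Nat.card (Quot (fun C D : {C : Multiset (Finset ℕ) //
      Multiset.card C = p ∧ IsDoubleCover C ∧ ∀ A ∈ C, 1 ≤ A.card ∧ A.card ≤ l} =>
    Isomorphic C.1 D.1))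

/-- The family `D_{l,p}` of double-coverings of `p` sets of cardinality `l`
contained in `{1,…,pl/2}`. -/
def Dfull (l p : ℕ) : Set (Multiset (Finset ℕ)) :=
  {C | Multiset.card C = p ∧ IsDoubleCover C ∧
    (∀ A ∈ C, A ⊆ Finset.Icc 1 (p * l / 2)) ∧ ∀ A ∈ C, A.card = l}

/-- The family `D*_{l,p}` of double-coverings of `p` sets of cardinality
between `1` and `l` contained in `{1,…,pl/2}`. -/
def Dstar (l p : ℕ) : Set (Multiset (Finset ℕ)) :=
  {C | Multiset.card C = p ∧ IsDoubleCover C ∧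
    (∀ A ∈ C, A ⊆ Finset.Icc 1 (p * l / 2)) ∧ ∀ A ∈ C, 1 ≤ A.card ∧ A.card ≤ l}

/-- The Rademacher function `r_n(x) = sign (sin (2^n π x))`. -/
noncomputable def rademacher (n : ℕ) (x : ℝ) : ℝ :=
  Real.sign (Real.sin (2 ^ n * Real.pi * x))

/-- The Walsh function `w_A = ∏_{k ∈ A} r_k`. -/
noncomputable def walsh (A : Finset ℕ) (x : ℝ) : ℝ :=
  ∏ k ∈ A, rademacher k x

lemma mem_unionC' {C : Multiset (Finset ℕ)} {a : ℕ} : a ∈ unionC C ↔ ∃ X ∈ C, a ∈ X := by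
  unfold unionC
  induction C using Multiset.induction with
  | empty => simp
  | cons x s ih => simp [Multiset.sup_cons, ih]

lemma countP_ofFn' {p : ℕ} (f : Fin p → Finset ℕ) (x : ℕ) :
    Multiset.countP (fun X => x ∈ X) (↑(List.ofFn f) : Multiset (Finset ℕ)) =
      (Finset.univ.filter (fun k => x ∈ f k)).card := by
  have h1 : (↑(List.ofFn f) : Multiset (Finset ℕ)) = Multiset.map f Finset.univ.val := by
    rw [Fin.univ_def]
    simp [List.ofFn_eq_map]
  rw [h1, Multiset.countP_map]
  rfl

/-- for an even-covering `{A_1,…,A_p}` there is a double-covering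
`{B_1,…,B_p}` and a surjection `φ : ∪ B_k → ∪ A_k` with `φ(B_k) = A_k` for all
`k`. -/
theorem stmt14 (p : ℕ) (A : Fin p → Finset ℕ)
    (hA : IsEvenCover (↑(List.ofFn A) : Multiset (Finset ℕ))) :
    ∃ B : Fin p → Finset ℕ,
      IsDoubleCover (↑(List.ofFn B) : Multiset (Finset ℕ)) ∧
      ∃ φ : ℕ → ℕ,
        Set.SurjOn φ ↑(unionC (↑(List.ofFn B) : Multiset (Finset ℕ)))
          ↑(unionC (↑(List.ofFn A) : Multiset (Finset ℕ))) ∧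
        ∀ k : Fin p, (B k).image φ = A k := by
  classical
  set L : ℕ → List (Fin p) :=
    fun a => (Finset.univ.filter (fun k => a ∈ A k)).sort (· ≤ ·) with hLdef
  have hmemL : ∀ a k, k ∈ L a ↔ a ∈ A k := by
    intro a k; simp [hLdef]
  have hnd : ∀ a, (L a).Nodup := fun a => Finset.sort_nodup _ _
  have hlen : ∀ a, (L a).length = (Finset.univ.filter (fun k => a ∈ A k)).card :=
    fun a => Finset.length_sort _
  -- the double-covering
  set B : Fin p → Finset ℕ :=
    fun k => (A k).image (fun a => Nat.pair a ((L a).idxOf k / 2)) with hBdef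
  -- membership in B k
  have hmemB : ∀ (k : Fin p) (a j : ℕ),
      Nat.pair a j ∈ B k ↔ a ∈ A k ∧ (L a).idxOf k / 2 = j := by
    intro k a j
    simp only [hBdef, Finset.mem_image]
    constructor
    · rintro ⟨a', ha', h⟩
      have := Nat.pair_eq_pair.mp h
      exact ⟨this.1 ▸ ha', this.1 ▸ this.2⟩
    · rintro ⟨ha, hj⟩
      exact ⟨a, ha, by rw [hj]⟩
  -- evenness of the lengths
  have heven : ∀ a, (∃ k, a ∈ A k) → Even (L a).length := by
    intro a ⟨k, hk⟩
    have ha : a ∈ unionC (↑(List.ofFn A) : Multiset (Finset ℕ)) :=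
      mem_unionC'.mpr ⟨A k, by simp [List.mem_ofFn], hk⟩
    have := hA a ha
    rwa [countP_ofFn', ← hlen] at this
  -- key counting lemma
  have hkey : ∀ (a j : ℕ), 2 * j + 1 < (L a).length →
      (Finset.univ.filter (fun k => Nat.pair a j ∈ B k)).card = 2 := by
    intro a j hj
    have hj2 : 2 * j < (L a).length := lt_trans (Nat.lt_succ_self _) hj
    set k₁ := (L a).get ⟨2 * j, hj2⟩ with hk₁
    set k₂ := (L a).get ⟨2 * j + 1, hj⟩ with hk₂
    have hne : k₁ ≠ k₂ := by
      intro h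
      have := (List.Nodup.get_inj_iff (hnd a)).mp h
      simp [Fin.ext_iff] at this
    have hset : Finset.univ.filter (fun k => Nat.pair a j ∈ B k) = {k₁, k₂} := by
      ext k
      simp only [Finset.mem_filter, Finset.mem_univ, true_and, Finset.mem_insert,
        Finset.mem_singleton, hmemB]
      constructor
      · rintro ⟨hk, hdiv⟩
        have hkL : k ∈ L a := (hmemL a k).mpr hk
        have hlt : (L a).idxOf k < (L a).length := List.idxOf_lt_length_iff.mpr hkL
        have : (L a).idxOf k = 2 * j ∨ (L a).idxOf k = 2 * j + 1 := by omega
        rcases this with h | h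
        · left; rw [hk₁]; symm
          have he : (⟨2 * j, hj2⟩ : Fin (L a).length) = ⟨(L a).idxOf k, hlt⟩ :=
            Fin.ext h.symm
          rw [he]; exact List.idxOf_get hlt
        · right; rw [hk₂]; symm
          have he : (⟨2 * j + 1, hj⟩ : Fin (L a).length) = ⟨(L a).idxOf k, hlt⟩ :=
            Fin.ext h.symm
          rw [he]; exact List.idxOf_get hlt
      · rintro (h | h)
        · subst h
          refine ⟨(hmemL a k₁).mp (List.get_mem _ _), ?_⟩
          rw [hk₁]
          have := (hnd a).idxOf_getElem (2 * j) hj2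
          simp only [List.get_eq_getElem]
          rw [this]; omega
        · subst h
          refine ⟨(hmemL a k₂).mp (List.get_mem _ _), ?_⟩
          rw [hk₂]
          have := (hnd a).idxOf_getElem (2 * j + 1) hj
          simp only [List.get_eq_getElem]
          rw [this]; omega
    rw [hset, Finset.card_pair hne]
  refine ⟨B, ?_, fun n => n.unpair.1, ?_, ?_⟩
  · -- double covering
    intro x hx
    obtain ⟨X, hX, hxX⟩ := mem_unionC'.mp hx
    obtain ⟨k, rfl⟩ := List.mem_ofFn.mp hX
    obtain ⟨a, ha, rfl⟩ := Finset.mem_image.mp hxX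
    rw [countP_ofFn', hkey]
    have hkL : k ∈ L a := (hmemL a k).mpr ha
    have hlt : (L a).idxOf k < (L a).length := List.idxOf_lt_length_iff.mpr hkL
    have hev := heven a ⟨k, ha⟩
    obtain ⟨m, hm⟩ := hev
    omega
  · -- surjectivity
    intro a ha
    obtain ⟨X, hX, haX⟩ := mem_unionC'.mp ha
    obtain ⟨k, rfl⟩ := List.mem_ofFn.mp hX
    refine ⟨Nat.pair a ((L a).idxOf k / 2), ?_, by simp⟩
    have : Nat.pair a ((L a).idxOf k / 2) ∈ B k :=
      (hmemB k a _).mpr ⟨haX, rfl⟩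
    exact_mod_cast Finset.mem_coe.mpr
      (mem_unionC'.mpr ⟨B k, by simp [List.mem_ofFn], this⟩)
  · -- φ(B k) = A k
    intro k
    rw [hBdef]
    rw [Finset.image_image]
    ext x
    simp [Nat.unpair_pair]
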